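/- Let A be a real symmetric d×d matrix with orthonormal eigenvectors u_1, ..., u_d and eigenvalues λ_1 ≥ λ_2 ≥ ... ≥ λ_d, and suppose λ_1 − λ_2 ≥ G for some G > 0. Let c ∈ (0, 1/32), let w be a unit vector with ⟨w, u_1⟩ ≥ 0, set λ = wᵀAw, and suppose λ_1 − λ ≤ 16cG. Then (1/2)λ_1 − (1/2) wᵀ A w ≤ 2‖(λ I − A) w‖² / G. -/

import Mathlib

open scoped RealInnerProductSpace

/-!
Expand `w` in the orthonormal eigenbasis, with weights `pᵢ = ⟪uᵢ, w⟫²` summing to one. Then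
`λ = ∑ λᵢ pᵢ`, `‖λ w - T w‖² = ∑ (λ - λᵢ)² pᵢ` and `λ₁ - λ = ∑ (λ₁ - λᵢ) pᵢ`, so it suffices to
compare the two sums term by term. The top term vanishes on both sides; every other eigenvalue lies
at least `G` below `λ₁`, while `λ` lies at most `16cG < G / 2` below it, so `λ - λᵢ ≥ (λ₁ - λᵢ) / 2`
and hence `(λ - λᵢ)² ≥ (λ₁ - λᵢ)² / 4 ≥ G (λ₁ - λᵢ) / 4`.
-/

open Finset

lemma gap_mul_sub_le_four_mul_sq {G top μ ν : ℝ} (hG : 0 ≤ G) (hclose : top - G / 2 ≤ μ)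
    (hν : ν = top ∨ ν ≤ top - G) :
    G * (top - ν) ≤ 4 * (μ - ν) ^ 2 := by
  rcases hν with rfl | hν
  · simp only [sub_self, mul_zero]
    positivity
  · have half : (top - ν) / 2 ≤ μ - ν := by linarith
    nlinarith [mul_le_mul_of_nonneg_right hν hG]

lemma gap_mul_sub_weighted_mean_le {ι : Type*} [Fintype ι] {p lam : ι → ℝ} {G μ : ℝ} (i₀ : ι)
    (hG : 0 ≤ G) (hp : ∀ i, 0 ≤ p i) (hp_sum : ∑ i, p i = 1) (hμ : μ = ∑ i, lam i * p i)
    (hgap : ∀ i ≠ i₀, lam i ≤ lam i₀ - G) (hclose : lam i₀ - G / 2 ≤ μ) :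
    G * (lam i₀ - μ) ≤ 4 * ∑ i, (μ - lam i) ^ 2 * p i := by
  have hmean : lam i₀ - μ = ∑ i, (lam i₀ - lam i) * p i := by
    simp only [hμ, sub_mul, sum_sub_distrib, ← mul_sum, hp_sum, mul_one]
  rw [hmean, mul_sum, mul_sum]
  refine sum_le_sum fun i _ => ?_
  have hterm := gap_mul_sub_le_four_mul_sq hG hclose
    (ν := lam i) ((eq_or_ne i i₀).imp (congrArg lam) (hgap i))
  simpa only [mul_assoc] using mul_le_mul_of_nonneg_right hterm (hp i)

namespace LinearMap.IsSymmetric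

variable {E ι : Type*} [NormedAddCommGroup E] [InnerProductSpace ℝ E] [Fintype ι]
  {T : E →ₗ[ℝ] E} {lam : ι → ℝ}

lemma inner_eigenvector_apply (hT : T.IsSymmetric) {v : E} {μ : ℝ} (hv : T v = μ • v) (x : E) :
    ⟪v, T x⟫ = μ * ⟪v, x⟫ := by
  rw [← hT, hv, real_inner_smul_left]

lemma inner_apply_self_eq_sum (hT : T.IsSymmetric) (b : OrthonormalBasis ι ℝ E)
    (heig : ∀ i, T (b i) = lam i • b i) (x : E) :
    ⟪x, T x⟫ = ∑ i, lam i * ⟪b i, x⟫ ^ 2 := by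
  rw [← b.sum_inner_mul_inner]
  refine sum_congr rfl fun i _ => ?_
  rw [hT.inner_eigenvector_apply (heig i), real_inner_comm]
  ring

lemma norm_smul_sub_apply_sq_eq_sum (hT : T.IsSymmetric) (b : OrthonormalBasis ι ℝ E)
    (heig : ∀ i, T (b i) = lam i • b i) (μ : ℝ) (x : E) :
    ‖μ • x - T x‖ ^ 2 = ∑ i, (μ - lam i) ^ 2 * ⟪b i, x⟫ ^ 2 := by
  rw [← b.sum_sq_inner_right]
  refine sum_congr rfl fun i _ => ?_
  rw [inner_sub_right, real_inner_smul_right, hT.inner_eigenvector_apply (heig i)]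
  ring

theorem gap_mul_sub_rayleigh_le (hT : T.IsSymmetric) (b : OrthonormalBasis ι ℝ E)
    (heig : ∀ i, T (b i) = lam i • b i) {G : ℝ} (hG : 0 ≤ G) (i₀ : ι) (hgap : ∀ i ≠ i₀, lam i ≤ lam i₀ - G)
    {x : E} (hx : ‖x‖ = 1) (hclose : lam i₀ - G / 2 ≤ ⟪x, T x⟫) :
    G * (lam i₀ - ⟪x, T x⟫) ≤ 4 * ‖⟪x, T x⟫ • x - T x‖ ^ 2 := by
  rw [hT.norm_smul_sub_apply_sq_eq_sum b heig]
  refine gap_mul_sub_weighted_mean_le i₀ hG (fun i => sq_nonneg _) ?_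
    (hT.inner_apply_self_eq_sum b heig x) hgap hclose
  rw [b.sum_sq_inner_right, hx, one_pow]

end LinearMap.IsSymmetric

/-- **gradient dominance near the top eigenvector.** Let `T` be a
symmetric operator on `ℝ^d` with orthonormal eigenvectors `u i`, eigenvalues `lam i`
in nonincreasing order, and eigengap `lam 0 − lam 1 ≥ G > 0`. Let `c ∈ (0, 1/32)`,
let `w` be a unit vector with `⟨w, u 0⟩ ≥ 0`, and set `λ = ⟨w, T w⟩`. If
`lam 0 − λ ≤ 16cG`, then `(1/2)·lam 0 − (1/2)⟨w, T w⟩ ≤ 2‖(λI − T)w‖²/G`. -/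
theorem stmt_13 {d : ℕ} (hd : 2 ≤ d)
    (T : EuclideanSpace ℝ (Fin d) →ₗ[ℝ] EuclideanSpace ℝ (Fin d))
    (hT : T.IsSymmetric)
    (u : Fin d → EuclideanSpace ℝ (Fin d)) (hu : Orthonormal ℝ u)
    (lam : Fin d → ℝ) (heig : ∀ i, T (u i) = lam i • u i) (hmono : Antitone lam)
    (G : ℝ) (hG : 0 < G)
    (hgap : lam ⟨0, by omega⟩ - lam ⟨1, by omega⟩ ≥ G)
    (c : ℝ) (hc' : c < 1 / 32)
    (w : EuclideanSpace ℝ (Fin d)) (hw : ‖w‖ = 1)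
    (hclose : lam ⟨0, by omega⟩ - ⟪w, T w⟫ ≤ 16 * c * G) :
    (1 / 2) * lam ⟨0, by omega⟩ - (1 / 2) * ⟪w, T w⟫ ≤
      2 * ‖⟪w, T w⟫ • w - T w‖ ^ 2 / G := by
  obtain ⟨b, rfl⟩ : ∃ b : OrthonormalBasis (Fin d) ℝ (EuclideanSpace ℝ (Fin d)), ⇑b = u :=
    ⟨.mk hu (hu.linearIndependent.span_eq_top_of_card_eq_finrank' (by simp)).ge, by simp⟩
  have hgap' : ∀ i ≠ ⟨0, by omega⟩, lam i ≤ lam ⟨0, by omega⟩ - G := fun i hi =>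
    calc lam i ≤ lam ⟨1, by omega⟩ := hmono (Fin.mk_le_of_le_val (Nat.one_le_iff_ne_zero.2
          fun h => hi (Fin.ext h)))
      _ ≤ lam ⟨0, by omega⟩ - G := by linarith
  have hdom := hT.gap_mul_sub_rayleigh_le b heig hG.le _ hgap' hw (by nlinarith)
  rw [le_div_iff₀ hG]
  linarith
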